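/- In the 3-node Kripke model with root a below two incomparable nodes b and c, where b forces only p and c forces only q, every formula θ built from p, q, ⊤ using only ¬, ∧, → satisfies: if both b and c force θ, then a forces θ. Consequently p ∨ q (forced at b and c but not at a) is not equivalent in intuitionistic propositional logic to any formula in the ∨-free fragment. -/

import Mathlib

inductive Fm (α : Type) : Type where
  | top  : Fm α
  | atom : α → Fm α
  | neg  : Fm α → Fm α
  | and  : Fm α → Fm α → Fm α
  | or   : Fm α → Fm α → Fm α
  | imp  : Fm α → Fm α → Fm α

structure KripkeModel (α : Type) : Type 1 where
  K : Type
  le : K → K → Prop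
  refl : ∀ k, le k k
  trans : ∀ {a b c}, le a b → le b c → le a c
  antisymm : ∀ {a b}, le a b → le b a → a = b
  val : K → α → Prop
  persist : ∀ {k k' p}, le k k' → val k p → val k' p

def force {α : Type} (M : KripkeModel α) : M.K → Fm α → Prop
  | _, .top => True
  | k, .atom p => M.val k p
  | k, .neg φ => ∀ k', M.le k k' → ¬ force M k' φ
  | k, .and φ ψ => force M k φ ∧ force M k ψ
  | k, .or φ ψ => force M k φ ∨ force M k ψ
  | k, .imp φ ψ => ∀ k', M.le k k' → force M k' φ → force M k' ψ

/-- ∨-free formulas: built using only ¬, ∧, →, ⊤ and atoms. -/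
def NoOr {α : Type} : Fm α → Prop
  | .top => True
  | .atom _ => True
  | .neg φ => NoOr φ
  | .and φ ψ => NoOr φ ∧ NoOr ψ
  | .or _ _ => False
  | .imp φ ψ => NoOr φ ∧ NoOr ψ

/-- The 3-node Kripke model with root a = 0 below two incomparable nodes b = 1
and c = 2, where b forces only the atom p = 0 and c forces only q = 1. -/
def M19 : KripkeModel (Fin 2) where
  K := Fin 3
  le := fun x y => x = y ∨ (x = 0 ∧ y = 1) ∨ (x = 0 ∧ y = 2)
  refl := by decide
  trans := by decide
  antisymm := by decide
  val := fun k p => (k = 1 ∧ p = 0) ∨ (k = 2 ∧ p = 1)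
  persist := by decide

/-!
An `∨`-free formula forced at every proper successor of a node `r` is forced at `r`, provided `r`
has a proper successor and forces each atom forced at all of them: for `¬` and `→` the only new
obligation is at `r` itself, and persistence carries the antecedent from `r` up to the proper
successors, after which induction on the consequent brings it back down. The root of `M19`
meets these provisos, yet `p ∨ q` holds at `b` and `c` but not at the root.
-/

theorem force_mono {α : Type} (M : KripkeModel α) {k k' : M.K} (h : M.le k k') {θ : Fm α}
    (hθ : force M k θ) : force M k' θ := by
  induction θ generalizing k k' with
  | top => trivial
  | atom p => exact M.persist h hθ
  | neg φ _ => exact fun k'' hle => hθ k'' (M.trans h hle)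
  | and φ ψ ihφ ihψ => exact ⟨ihφ h hθ.1, ihψ h hθ.2⟩
  | or φ ψ ihφ ihψ => exact hθ.imp (ihφ h) (ihψ h)
  | imp φ ψ _ _ => exact fun k'' hle => hθ k'' (M.trans h hle)

theorem NoOr.force_of_forall_succ {α : Type} {M : KripkeModel α} {r : M.K}
    (hr : ∃ s, M.le r s ∧ s ≠ r) (hval : ∀ p, (∀ s, M.le r s → s ≠ r → M.val s p) → M.val r p)
    {θ : Fm α} (hθ : NoOr θ) (h : ∀ s, M.le r s → s ≠ r → force M s θ) : force M r θ := by
  induction θ with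
  | top => trivial
  | atom p => exact hval p h
  | neg φ _ =>
    intro k hrk hφ
    by_cases hk : k = r
    · subst hk
      obtain ⟨s, hks, hsk⟩ := hr
      exact h s hks hsk s (M.refl s) (force_mono M hks hφ)
    · exact h k hrk hk k (M.refl k) hφ
  | and φ ψ ihφ ihψ =>
    exact ⟨ihφ hθ.1 fun s hs hsr => (h s hs hsr).1, ihψ hθ.2 fun s hs hsr => (h s hs hsr).2⟩
  | or φ ψ _ _ => exact hθ.elim
  | imp φ ψ _ ihψ =>
    intro k hrk hφ
    by_cases hk : k = r
    · subst hk
      exact ihψ hθ.2 fun s hs hsk => h s hs hsk s (M.refl s) (force_mono M hs hφ)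
    · exact h k hrk hk k (M.refl k) hφ

theorem M19.force_zero_of_noOr {θ : Fm (Fin 2)} (hθ : NoOr θ) (h₁ : force M19 (1 : Fin 3) θ)
    (h₂ : force M19 (2 : Fin 3) θ) : force M19 (0 : Fin 3) θ := by
  have h01 : M19.le (0 : Fin 3) (1 : Fin 3) := Or.inr (Or.inl ⟨rfl, rfl⟩)
  have h02 : M19.le (0 : Fin 3) (2 : Fin 3) := Or.inr (Or.inr ⟨rfl, rfl⟩)
  refine hθ.force_of_forall_succ ⟨(1 : Fin 3), h01, (by decide : (1 : Fin 3) ≠ 0)⟩ ?_ ?_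
  · intro p hp
    have hp₁ := hp (1 : Fin 3) h01 (by decide : (1 : Fin 3) ≠ 0)
    have hp₂ := hp (2 : Fin 3) h02 (by decide : (2 : Fin 3) ≠ 0)
    simp only [M19] at hp₁ hp₂
    omega
  · rintro s (rfl | ⟨-, rfl⟩ | ⟨-, rfl⟩) hs
    exacts [absurd rfl hs, h₁, h₂]

theorem M19.force_or_iff (k : Fin 3) :
    force M19 k (Fm.or (Fm.atom 0) (Fm.atom 1)) ↔ k ≠ 0 := by
  fin_cases k <;> simp [force, M19]

/-- In the model M19, every ∨-free formula θ forced at both b and c is forced at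
the root a; b and c force p ∨ q but a does not; hence p ∨ q is not forced at
exactly the same nodes as any ∨-free formula in every Kripke model, i.e. ∨ is
not definable from ¬, ∧, →, ⊤ in intuitionistic propositional logic. -/
theorem or_not_definable_IPL :
    (∀ θ : Fm (Fin 2), NoOr θ →
        force M19 (1 : Fin 3) θ → force M19 (2 : Fin 3) θ →
        force M19 (0 : Fin 3) θ) ∧
    (force M19 (1 : Fin 3) (Fm.or (Fm.atom 0) (Fm.atom 1)) ∧
     force M19 (2 : Fin 3) (Fm.or (Fm.atom 0) (Fm.atom 1)) ∧
     ¬ force M19 (0 : Fin 3) (Fm.or (Fm.atom 0) (Fm.atom 1))) ∧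
    ¬ ∃ θ : Fm (Fin 2), NoOr θ ∧
        ∀ (M : KripkeModel (Fin 2)) (k : M.K),
          (force M k θ ↔ force M k (Fm.or (Fm.atom 0) (Fm.atom 1))) := by
  have hb := (M19.force_or_iff 1).2 (by decide)
  have hc := (M19.force_or_iff 2).2 (by decide)
  have ha : ¬ force M19 (0 : Fin 3) (Fm.or (Fm.atom 0) (Fm.atom 1)) :=
    fun h => (M19.force_or_iff 0).1 h rfl
  refine ⟨fun θ => M19.force_zero_of_noOr, ⟨hb, hc, ha⟩, ?_⟩
  rintro ⟨θ, hθ, hdef⟩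
  exact ha <| (hdef M19 _).1 <|
    M19.force_zero_of_noOr hθ ((hdef M19 _).2 hb) ((hdef M19 _).2 hc)
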